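/- With A^- = (A*)^{-1}/(q-1) + (A*)^{-1}L and y^{↓↓} = ∑_{z ≤ y} ẑ for y ∈ X, one has A^- y^{↓↓} = (q^{dim y}/(q-1)) y^{↓↓}; consequently A^- is diagonalizable with eigenvalues q^i/(q-1) for 0 ≤ i ≤ N, and the eigenspace for q^i/(q-1) has dimension binom(N,i)_q. -/

import Mathlib

open Matrix

noncomputable section
open scoped Classical

variable (F : Type) [Field F] [Fintype F] (N : ℕ)

/-- The vertex set: all subspaces of the `N`-dimensional vector space over `GF(q)`. -/
abbrev X := Submodule F (Fin N → F)

noncomputable instance : Fintype (X F N) := Fintype.ofFinite _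

/-- The dimension of a subspace. -/
def dimS (y : X F N) : ℕ := Module.finrank F y

/-- `y` covers `z` : `z ⊆ y` and `dim y = dim z + 1`. -/
def Covers (y z : X F N) : Prop := z ≤ y ∧ dimS F N y = dimS F N z + 1

/-- The raising matrix `R`. -/
def R : Matrix (X F N) (X F N) ℂ := fun y z => if Covers F N y z then 1 else 0

/-- The lowering matrix `L = Rᵗ`. -/
def L : Matrix (X F N) (X F N) ℂ := (R F N)ᵀ

/-- The diagonal matrix `A*` with `(y,y)`-entry `q^{-dim y}`. -/
def Astar : Matrix (X F N) (X F N) ℂ :=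
  Matrix.diagonal fun y => (Fintype.card F : ℂ) ^ (-(dimS F N y : ℤ))

/-- `y^{↓↓} = ∑_{z ≤ y} ẑ` in `V = ℂ^X`. -/
def dd (y : X F N) : X F N → ℂ :=
  ∑ z ∈ Finset.univ.filter (fun z : X F N => z ≤ y), Pi.single z (1 : ℂ)

/-- `[n]_q = (q^n - 1)/(q - 1)`. -/
def qInt (q n : ℕ) : ℕ := (q ^ n - 1) / (q - 1)

/-- `[n]_q!`. -/
def qFact (q n : ℕ) : ℕ := ∏ j ∈ Finset.range n, qInt q (j + 1)

/-- The Gaussian binomial coefficient `binom(N,i)_q`. -/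
def qBinom (q N i : ℕ) : ℕ := qFact q N / (qFact q i * qFact q (N - i))

/-!
For `w ≤ y`, the subspaces covering `w` inside `y` are the spans `w ⊔ ⟨v⟩` with `v ∈ y \ w`, each
obtained from exactly `q^{dim w + 1} - q^{dim w}` vectors `v`; hence there are
`(q^{dim y} - q^{dim w}) / (q^{dim w} (q - 1))` of them, which is exactly what makes
`(A⁻ y^{↓↓})_w = q^{dim w} ((q - 1)⁻¹ + #{z | w ⋖ z ≤ y})` equal to `q^{dim y} / (q - 1)`.
The vectors `y^{↓↓}` are unitriangular with respect to the standard basis, so they form an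
eigenbasis of `A⁻`, and the eigenspace of `q^i / (q - 1)` has dimension the number of
`i`-dimensional subspaces. Counting linearly independent `i`-tuples in two ways identifies this
number with the Gaussian binomial coefficient.
-/

open Finset Module Submodule

theorem qInt_mul_sub_one (q n : ℕ) : qInt q n * (q - 1) = q ^ n - 1 :=
  Nat.div_mul_cancel (by simpa using Nat.sub_dvd_pow_sub_pow q 1 n)

theorem qFact_zero (q : ℕ) : qFact q 0 = 1 := prod_range_zero _

theorem qFact_succ (q m : ℕ) : qFact q (m + 1) = qFact q m * qInt q (m + 1) :=
  prod_range_succ _ _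

theorem qFact_pos {q : ℕ} (hq : 2 ≤ q) (m : ℕ) : 0 < qFact q m :=
  prod_pos fun _ _ =>
    Nat.div_pos (Nat.sub_le_sub_right (Nat.le_self_pow (by omega) q) 1) (by omega)

theorem pow_sub_pow_eq_mul_qInt (q : ℕ) {k n : ℕ} (h : k ≤ n) :
    q ^ n - q ^ k = q ^ k * (q - 1) * qInt q (n - k) := by
  rw [mul_assoc, mul_comm (q - 1), qInt_mul_sub_one, Nat.mul_sub, mul_one, ← pow_add,
    Nat.add_sub_cancel' h]

theorem prod_pow_sub_pow_mul_qFact (q : ℕ) {k n : ℕ} (h : k ≤ n) :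
    (∏ j ∈ range k, (q ^ n - q ^ j)) * qFact q (n - k)
      = q ^ (∑ j ∈ range k, j) * (q - 1) ^ k * qFact q n := by
  induction k with
  | zero => simp
  | succ k ih =>
    have hk : n - k = n - (k + 1) + 1 := by omega
    calc (∏ j ∈ range (k + 1), (q ^ n - q ^ j)) * qFact q (n - (k + 1))
        = (∏ j ∈ range k, (q ^ n - q ^ j)) * qFact q (n - k) * (q ^ k * (q - 1)) := by
          rw [prod_range_succ, pow_sub_pow_eq_mul_qInt q (by omega : k ≤ n), hk, qFact_succ]
          ring
      _ = _ := by rw [ih (by omega), sum_range_succ, pow_add, pow_succ]; ring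

theorem qBinom_eq_of_mul_prod_eq {q n k G : ℕ} (hq : 2 ≤ q) (hk : k ≤ n)
    (hG : G * ∏ j ∈ range k, (q ^ k - q ^ j) = ∏ j ∈ range k, (q ^ n - q ^ j)) :
    qBinom q n k = G := by
  have hc : 0 < q ^ (∑ j ∈ range k, j) * (q - 1) ^ k :=
    Nat.mul_pos (by positivity) (pow_pos (by omega) _)
  have key : G * (qFact q k * qFact q (n - k)) = qFact q n := by
    apply Nat.eq_of_mul_eq_mul_left hc
    calc _ = G * ((∏ j ∈ range k, (q ^ k - q ^ j)) * qFact q (k - k)) * qFact q (n - k) := by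
          rw [prod_pow_sub_pow_mul_qFact q le_rfl]; ring
      _ = _ := by
          rw [Nat.sub_self, qFact_zero, mul_one, hG, prod_pow_sub_pow_mul_qFact q hk]
  rw [qBinom, ← key, Nat.mul_div_cancel _ (Nat.mul_pos (qFact_pos hq k) (qFact_pos hq _))]

theorem sup_span_singleton_eq_of_finrank_eq_succ {K M : Type*} [Field K] [AddCommGroup M]
    [Module K M] [FiniteDimensional K M] {w z : Submodule K M} {v : M} (hwz : w ≤ z)
    (hz : finrank K z = finrank K w + 1) (hvz : v ∈ z) (hvw : v ∉ w) : w ⊔ span K {v} = z :=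
  eq_of_le_of_finrank_eq (sup_le hwz ((span_singleton_le_iff_mem v z).mpr hvz))
    (by rw [finrank_sup_span_singleton hvw, hz])

section SubspaceCount

variable {K M : Type*} [Field K] [Fintype K] [AddCommGroup M] [Module K M] [Fintype M]

local notation "q" => Fintype.card K

def spanEqLinearIndependentEquiv {k : ℕ} (W : Submodule K M) (hW : finrank K W = k) :
    {s : Fin k → M // LinearIndependent K s ∧ span K (Set.range s) = W}
      ≃ {s : Fin k → W // LinearIndependent K s} where
  toFun s := ⟨fun j => ⟨s.1 j, s.2.2.le (subset_span ⟨j, rfl⟩)⟩,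
    .of_comp W.subtype s.2.1⟩
  invFun s := ⟨W.subtype ∘ s.1, s.2.map' W.subtype W.ker_subtype, by
    have htop : span K (Set.range s.1) = ⊤ :=
      eq_top_of_finrank_eq (by rw [finrank_span_eq_card s.2, Fintype.card_fin, hW])
    rw [Set.range_comp, ← map_span, htop, Submodule.map_top, range_subtype]⟩
  left_inv _ := rfl
  right_inv _ := rfl

theorem card_linearIndependent_span_eq {k : ℕ} {W : Submodule K M} (hW : finrank K W = k) :
    #{s : Fin k → M | LinearIndependent K s ∧ span K (Set.range s) = W}
      = ∏ j ∈ range k, (q ^ k - q ^ j) := by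
  rw [← Fintype.card_subtype, ← Nat.card_eq_fintype_card,
    Nat.card_congr (spanEqLinearIndependentEquiv W hW), card_linearIndependent hW.ge, hW,
    Fin.prod_univ_eq_prod_range (fun j => q ^ k - q ^ j)]

theorem card_finrank_eq_mul_prod [Fintype (Submodule K M)] {k : ℕ} (hk : k ≤ finrank K M) :
    #{W : Submodule K M | finrank K W = k} * ∏ j ∈ range k, (q ^ k - q ^ j)
      = ∏ j ∈ range k, (q ^ finrank K M - q ^ j) := by
  have hspan : ∀ s ∈ ({s | LinearIndependent K s} : Finset (Fin k → M)),
      span K (Set.range s) ∈ ({W | finrank K W = k} : Finset (Submodule K M)) := by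
    intro s hs
    rw [mem_filter_univ] at hs ⊢
    rw [finrank_span_eq_card hs, Fintype.card_fin]
  have hfibers := card_eq_sum_card_fiberwise hspan
  rw [sum_congr rfl fun W hW => ?_, sum_const, smul_eq_mul] at hfibers
  · rw [← hfibers, ← Fintype.card_subtype, ← Nat.card_eq_fintype_card, card_linearIndependent hk,
      Fin.prod_univ_eq_prod_range (fun j => q ^ finrank K M - q ^ j)]
  · rw [filter_filter, card_linearIndependent_span_eq ((mem_filter_univ W).mp hW)]

theorem card_mem_submodule (p : Submodule K M) : #{v : M | v ∈ p} = q ^ finrank K p := by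
  rw [← Fintype.card_subtype, ← card_eq_pow_finrank (K := K) (V := p)]

theorem card_mem_notMem {w z : Submodule K M} (h : w ≤ z) :
    #{v : M | v ∈ z ∧ v ∉ w} = q ^ finrank K z - q ^ finrank K w := by
  have hsub : ({v | v ∈ w} : Finset M) ⊆ ({v | v ∈ z} : Finset M) :=
    monotone_filter_right _ fun _ _ hv => h hv
  rw [← card_mem_submodule, ← card_mem_submodule, ← card_sdiff_of_subset hsub]
  congr 1
  ext v
  simp

theorem card_covers_mul [Fintype (Submodule K M)] {w y : Submodule K M} (hwy : w ≤ y) :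
    #{z : Submodule K M | w ≤ z ∧ z ≤ y ∧ finrank K z = finrank K w + 1}
        * (q ^ (finrank K w + 1) - q ^ finrank K w)
      = q ^ finrank K y - q ^ finrank K w := by
  have hcover : ∀ v ∈ ({v | v ∈ y ∧ v ∉ w} : Finset M), w ⊔ span K {v} ∈
      ({z | w ≤ z ∧ z ≤ y ∧ finrank K z = finrank K w + 1} : Finset (Submodule K M)) := by
    intro v hv
    rw [mem_filter_univ] at hv ⊢
    exact ⟨le_sup_left, sup_le hwy ((span_singleton_le_iff_mem v y).mpr hv.1),
      finrank_sup_span_singleton hv.2⟩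
  have hfibers := card_eq_sum_card_fiberwise hcover
  rw [sum_congr rfl fun z hz => ?_, sum_const, smul_eq_mul, card_mem_notMem hwy] at hfibers
  · exact hfibers.symm
  · obtain ⟨hwz, hzy, hz⟩ := (mem_filter_univ z).mp hz
    rw [filter_filter, ← hz, ← card_mem_notMem hwz]
    congr 1
    ext v
    simp only [mem_filter_univ]
    constructor
    · rintro ⟨⟨-, hvw⟩, rfl⟩
      exact ⟨mem_sup_right (mem_span_singleton_self v), hvw⟩
    · rintro ⟨hvz, hvw⟩
      exact ⟨⟨hzy hvz, hvw⟩, sup_span_singleton_eq_of_finrank_eq_succ hwz hz hvz hvw⟩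

end SubspaceCount

theorem Module.End.finrank_eigenspace_of_basis {ι K V : Type*} [Fintype ι] [Field K]
    [AddCommGroup V] [Module K V] (b : Basis ι K V) {f : Module.End K V} {d : ι → K}
    (hf : ∀ i, f (b i) = d i • b i) (μ : K) :
    finrank K (Module.End.eigenspace f μ) = #{i | d i = μ} := by
  have hrepr : ∀ x i, b.repr (f x) i = d i * b.repr x i := by
    intro x i
    have : (b.coord i).comp f = d i • b.coord i :=
      b.ext fun j => by
        simp only [LinearMap.comp_apply, hf, map_smul, Basis.coord_apply, Basis.repr_self,
          LinearMap.smul_apply, smul_eq_mul, Finsupp.single_apply]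
        split_ifs with hji <;> simp [hji]
    simpa using LinearMap.congr_fun this x
  have heig : Module.End.eigenspace f μ = span K (b '' {i | d i = μ}) := by
    refine le_antisymm (fun x hx => ?_) (span_le.2 ?_)
    · rw [b.mem_span_image]
      intro i hi
      have := hrepr x i
      rw [Module.End.mem_eigenspace_iff.1 hx, map_smul, Finsupp.smul_apply, smul_eq_mul] at this
      exact (mul_right_cancel₀ (Finsupp.mem_support_iff.1 hi) this).symm
    · rintro _ ⟨i, rfl, rfl⟩
      exact Module.End.mem_eigenspace_iff.2 (hf i)
  rw [heig, Set.image_eq_range, ← Fintype.card_subtype]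
  exact finrank_span_eq_card (b.linearIndependent.comp _ Subtype.val_injective)

def Aminus : Matrix (X F N) (X F N) ℂ :=
  ((Fintype.card F : ℂ) - 1)⁻¹ • (Astar F N)⁻¹ + (Astar F N)⁻¹ * L F N

theorem card_field_pow_ne_zero (n : ℕ) : (Fintype.card F : ℂ) ^ n ≠ 0 :=
  pow_ne_zero _ (Nat.cast_ne_zero.2 Fintype.card_ne_zero)

theorem card_field_sub_one_ne_zero : (Fintype.card F : ℂ) - 1 ≠ 0 := by
  rw [sub_ne_zero, Ne, Nat.cast_eq_one]
  exact Fintype.one_lt_card.ne'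

theorem Astar_inv : (Astar F N)⁻¹ = diagonal fun y => (Fintype.card F : ℂ) ^ dimS F N y := by
  refine inv_eq_right_inv ?_
  rw [Astar, diagonal_mul_diagonal, ← diagonal_one]
  congr 1
  funext y
  rw [_root_.zpow_neg, zpow_natCast, inv_mul_cancel₀ (card_field_pow_ne_zero F _)]

theorem dd_apply (y z : X F N) : dd F N y z = if z ≤ y then 1 else 0 := by
  simp [dd, Finset.sum_apply, Pi.single_apply]

theorem L_mulVec_dd_apply (y w : X F N) :
    (L F N *ᵥ dd F N y) w = #{z : X F N | w ≤ z ∧ z ≤ y ∧ dimS F N z = dimS F N w + 1} := by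
  simp only [mulVec, dotProduct, L, R, Covers, transpose_apply, dd_apply, mul_ite, mul_one,
    mul_zero]
  rw [← sum_boole]
  refine sum_congr rfl fun z _ => ?_
  grind

theorem Aminus_mulVec_dd (y : X F N) :
    Aminus F N *ᵥ dd F N y
      = ((Fintype.card F : ℂ) ^ dimS F N y / ((Fintype.card F : ℂ) - 1)) • dd F N y := by
  funext w
  rw [Aminus, add_mulVec, smul_mulVec, ← mulVec_mulVec, Astar_inv]
  simp only [Pi.add_apply, Pi.smul_apply, mulVec_diagonal, smul_eq_mul, L_mulVec_dd_apply,
    dd_apply]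
  by_cases hwy : w ≤ y
  · have hcount : #{z : X F N | w ≤ z ∧ z ≤ y ∧ dimS F N z = dimS F N w + 1}
          * (Fintype.card F ^ (dimS F N w + 1) - Fintype.card F ^ dimS F N w)
        = Fintype.card F ^ dimS F N y - Fintype.card F ^ dimS F N w :=
      card_covers_mul hwy
    have hpow_mono {i j : ℕ} : i ≤ j → Fintype.card F ^ i ≤ Fintype.card F ^ j :=
      Nat.pow_le_pow_right Fintype.card_pos
    replace hcount := congrArg (Nat.cast (R := ℂ)) hcount
    have hdim : dimS F N w ≤ dimS F N y := finrank_mono hwy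
    push_cast [Nat.cast_sub (hpow_mono hdim), Nat.cast_sub (hpow_mono (Nat.le_add_right _ 1))]
      at hcount
    rw [if_pos hwy]
    field_simp [card_field_sub_one_ne_zero F]
    linear_combination hcount
  · have hnone : #{z : X F N | w ≤ z ∧ z ≤ y ∧ dimS F N z = dimS F N w + 1} = 0 :=
      card_eq_zero.2 (filter_eq_empty_iff.2 fun z _ h => hwy (h.1.trans h.2.1))
    simp [hwy, hnone]

theorem single_mem_span_range_dd (y : X F N) :
    Pi.single y 1 ∈ span ℂ (Set.range (dd F N)) := by
  induction y using WellFoundedLT.induction with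
  | _ y ih =>
    have hsplit : dd F N y = Pi.single y 1 + ∑ z ∈ {z | z < y}, Pi.single z 1 := by
      rw [dd, ← add_sum_erase _ _ (show y ∈ ({z | z ≤ y} : Finset (X F N)) by simp)]
      congr 2
      ext z
      simp [lt_iff_le_and_ne, and_comm]
    rw [eq_sub_of_add_eq hsplit.symm]
    exact sub_mem (subset_span ⟨y, rfl⟩)
      (sum_mem fun z hz => ih z ((mem_filter_univ z).1 hz))

theorem span_range_dd : span ℂ (Set.range (dd F N)) = ⊤ := by
  rw [eq_top_iff, ← (Pi.basisFun ℂ (X F N)).span_eq, span_le]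
  rintro _ ⟨y, rfl⟩
  simpa using single_mem_span_range_dd F N y

def ddBasis : Basis (X F N) ℂ (X F N → ℂ) :=
  basisOfTopLeSpanOfCardEqFinrank (dd F N) (span_range_dd F N).ge
    (finrank_fintype_fun_eq_card ℂ).symm

theorem coe_ddBasis : ⇑(ddBasis F N) = dd F N :=
  coe_basisOfTopLeSpanOfCardEqFinrank _ _ _

theorem card_dimS_eq_qBinom {i : ℕ} (hi : i ≤ N) :
    #{y : X F N | dimS F N y = i} = qBinom (Fintype.card F) N i := by
  refine (qBinom_eq_of_mul_prod_eq Fintype.one_lt_card hi ?_).symm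
  have := card_finrank_eq_mul_prod (K := F) (M := Fin N → F) (k := i)
    (hi.trans_eq (finrank_fin_fun F).symm)
  rwa [finrank_fin_fun] at this

theorem card_pow_div_sub_one_inj {i j : ℕ} :
    (Fintype.card F : ℂ) ^ i / ((Fintype.card F : ℂ) - 1)
      = (Fintype.card F : ℂ) ^ j / ((Fintype.card F : ℂ) - 1) ↔ i = j := by
  rw [div_left_inj' (card_field_sub_one_ne_zero F)]
  exact_mod_cast (Nat.pow_right_injective Fintype.one_lt_card).eq_iff

theorem stmt_17 :
    let q : ℂ := (Fintype.card F : ℂ)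
    let Am : Matrix (X F N) (X F N) ℂ := (q - 1)⁻¹ • (Astar F N)⁻¹ + (Astar F N)⁻¹ * L F N
    (∀ y : X F N, Am.mulVec (dd F N y) = (q ^ (dimS F N y) / (q - 1)) • dd F N y) ∧
    (∀ i : ℕ, i ≤ N →
      Module.finrank ℂ ↥(Module.End.eigenspace Am.mulVecLin (q ^ i / (q - 1))) =
        qBinom (Fintype.card F) N i) ∧
    (⨆ i ∈ Finset.range (N + 1), Module.End.eigenspace Am.mulVecLin (q ^ i / (q - 1))) = ⊤ := by
  intro q Am
  have hdd : ∀ y, Am *ᵥ dd F N y = (q ^ dimS F N y / (q - 1)) • dd F N y := Aminus_mulVec_dd F N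
  refine ⟨hdd, fun i hi => ?_, ?_⟩
  · rw [Module.End.finrank_eigenspace_of_basis (ddBasis F N)
      (fun y => by rw [coe_ddBasis, mulVecLin_apply, hdd])]
    simp_rw [q, card_pow_div_sub_one_inj]
    exact card_dimS_eq_qBinom F N hi
  · rw [eq_top_iff, ← span_range_dd F N, span_le]
    rintro _ ⟨y, rfl⟩
    exact mem_iSup_of_mem (dimS F N y) <| mem_iSup_of_mem (mem_range.2 (Nat.lt_succ_of_le
      ((finrank_le y).trans_eq (finrank_fin_fun F)))) <| Module.End.mem_eigenspace_iff.2 (hdd y)
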